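/- arXiv:2604.26336 — 7 statements merged into one kernel-verified Lean document; each statement's English description precedes it below -/
import Mathlib

section
/- (Local discrete maximum principle with respect to DOFs, Theorem 4.2.) Assume ∑_{j=1}^N s_{ij} = 0 for every i (zero row sums), m_i > 0 for every i, Δt ≥ 0, and the CFL condition Δt·(s_{ii} − v_{ii}) ≤ m_i for every i, where V is the minimum viscosity matrix of S. Then for every i, the low-order update U'_i = U_i − (Δt/m_i) ∑_{j=1}^N (s_{ij} − v_{ij}) U_j satisfies min_{j ∈ J_i} U_j ≤ U'_i ≤ max_{j ∈ J_i} U_j, where J_i := {i} ∪ {j ≠ i : s_{ij} ≠ 0 or s_{ji} ≠ 0}. In particular, if u_min ≤ U_j ≤ u_max for all j, then u_min ≤ U'_j ≤ u_max for all j. -/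
/-!
Row `i` of the low-order operator `I - Δt M⁻¹ (S - V)` has nonnegative entries: off the
diagonal because the minimum viscosity `v_ij ≥ s_ij` makes `s_ij - v_ij ≤ 0`, on the diagonal
by the CFL condition. Its entries sum to one because both `S` and `V` have zero row sums, and
`s_ij - v_ij` vanishes unless `j ∈ J_i`. Hence `U'_i` is a convex combination of the values
`U_j`, `j ∈ J_i`, and lies between their minimum and maximum.
-/

open Finset

section ConvexCombination

variable {ι : Type*} [Fintype ι]

theorem sum_mul_mem_Icc_inf'_sup' {w U : ι → ℝ} {J : Finset ι} (hJ : J.Nonempty)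
    (hw₀ : ∀ j, 0 ≤ w j) (hw₁ : ∑ j, w j = 1) (hwJ : ∀ j, w j ≠ 0 → j ∈ J) :
    ∑ j, w j * U j ∈ Set.Icc (J.inf' hJ U) (J.sup' hJ U) := by
  have hvanish : ∀ j ∈ univ, j ∉ J → w j = 0 := fun j _ hj => by_contra (hj ∘ hwJ j)
  have hwJ₁ : ∑ j ∈ J, w j = 1 := by rw [sum_subset (subset_univ J) hvanish, hw₁]
  have hcenter : J.centerMass w U = ∑ j, w j * U j := by
    rw [centerMass_subset U (subset_univ J) hvanish, centerMass_eq_of_sum_1 _ _ hw₁]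
    rfl
  rw [← hcenter]
  exact ⟨inf_le_centerMass (fun j _ => hw₀ j) (by rw [hwJ₁]; exact one_pos),
    centerMass_le_sup (fun j _ => hw₀ j) (by rw [hwJ₁]; exact one_pos)⟩

variable [DecidableEq ι]

theorem sum_eq_zero_of_diag_eq_neg_sum_erase {A : ι → ℝ} {i : ι}
    (hdiag : A i = -∑ j ∈ univ.erase i, A j) : ∑ j, A j = 0 := by
  rw [← add_sum_erase _ _ (mem_univ i), hdiag, neg_add_cancel]

theorem sub_mul_sum_mem_Icc_inf'_sup' {A U : ι → ℝ} {i : ι} {τ : ℝ} {J : Finset ι}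
    (hiJ : i ∈ J) (hA : ∑ j, A j = 0) (hoff : ∀ j, j ≠ i → A j ≤ 0) (hτ : 0 ≤ τ)
    (hcfl : τ * A i ≤ 1) (hAJ : ∀ j, A j ≠ 0 → j ∈ J) :
    U i - τ * ∑ j, A j * U j ∈ Set.Icc (J.inf' ⟨i, hiJ⟩ U) (J.sup' ⟨i, hiJ⟩ U) := by
  set w : ι → ℝ := fun j => (if j = i then 1 else 0) - τ * A j
  have hw₀ : ∀ j, 0 ≤ w j := by
    intro j
    by_cases hj : j = i
    · subst hj; simp only [w, if_true]; linarith
    · simp only [w, if_neg hj]; nlinarith [hoff j hj]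
  have hw₁ : ∑ j, w j = 1 := by
    simp only [w, sum_sub_distrib, ← mul_sum, hA, sum_ite_eq', mem_univ, if_true, mul_zero,
      sub_zero]
  have hwJ : ∀ j, w j ≠ 0 → j ∈ J := by
    intro j hj
    by_cases hji : j = i
    · exact hji ▸ hiJ
    · refine hAJ j fun hA0 => hj ?_
      simp only [w, if_neg hji, hA0, mul_zero, sub_zero]
  have hstep : U i - τ * ∑ j, A j * U j = ∑ j, w j * U j := by
    simp only [w, sub_mul, sum_sub_distrib, ite_mul, one_mul, zero_mul, sum_ite_eq', mem_univ,
      if_true, mul_sum, mul_assoc]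
  rw [hstep]
  exact sum_mul_mem_Icc_inf'_sup' _ hw₀ hw₁ hwJ

end ConvexCombination

open Finset in
/-- Local discrete maximum principle with respect to DOFs (Theorem 4.2): with the
minimum viscosity matrix `V` of `S` and under the CFL condition
`Δt * (S i i - V i i) ≤ m i`, each component of the low-order update is bounded by
the extrema of the previous values over the neighbor set
`J i = {i} ∪ {j ≠ i : S i j ≠ 0 ∨ S j i ≠ 0}`; in particular any uniform bounds on
`U` are preserved. -/
theorem local_discrete_maximum_principle
    (N : ℕ) (S V : Fin N → Fin N → ℝ)
    (hVoff : ∀ i j, i ≠ j → V i j = max 0 (max (S i j) (S j i)))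
    (hVdiag : ∀ i, V i i = -∑ j ∈ univ.erase i, V i j)
    (hrow : ∀ i, ∑ j, S i j = 0)
    (m : Fin N → ℝ) (hm : ∀ i, 0 < m i)
    (Δt : ℝ) (hΔt : 0 ≤ Δt)
    (hCFL : ∀ i, Δt * (S i i - V i i) ≤ m i)
    (U U' : Fin N → ℝ)
    (hU' : ∀ i, U' i = U i - (Δt / m i) * ∑ j, (S i j - V i j) * U j) :
    (∀ i,
      (insert i (univ.filter fun j => j ≠ i ∧ (S i j ≠ 0 ∨ S j i ≠ 0))).inf'
          ⟨i, Finset.mem_insert_self i _⟩ U ≤ U' i ∧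
      U' i ≤ (insert i (univ.filter fun j => j ≠ i ∧ (S i j ≠ 0 ∨ S j i ≠ 0))).sup'
          ⟨i, Finset.mem_insert_self i _⟩ U) ∧
    (∀ umin umax : ℝ, (∀ j, umin ≤ U j ∧ U j ≤ umax) →
      ∀ j, umin ≤ U' j ∧ U' j ≤ umax) := by
  let J i := insert i (univ.filter fun j => j ≠ i ∧ (S i j ≠ 0 ∨ S j i ≠ 0))
  have hlocal : ∀ i, U' i ∈ Set.Icc ((J i).inf' ⟨i, mem_insert_self i _⟩ U)
      ((J i).sup' ⟨i, mem_insert_self i _⟩ U) := by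
    intro i
    have hsum : ∑ j, (S i j - V i j) = 0 := by
      rw [sum_sub_distrib, hrow, sum_eq_zero_of_diag_eq_neg_sum_erase (hVdiag i), sub_zero]
    have hoff : ∀ j, j ≠ i → S i j - V i j ≤ 0 := fun j hj => by
      rw [hVoff i j (Ne.symm hj)]
      linarith [le_max_left (S i j) (S j i), le_max_right 0 (max (S i j) (S j i))]
    have hcfl : Δt / m i * (S i i - V i i) ≤ 1 := by
      rw [div_mul_eq_mul_div, div_le_one (hm i)]
      exact hCFL i
    have hsupp : ∀ j, S i j - V i j ≠ 0 → j ∈ J i := by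
      intro j hj
      by_cases hji : j = i
      · subst hji; exact mem_insert_self j _
      refine mem_insert_of_mem (mem_filter.mpr ⟨mem_univ j, hji, not_and_or.mp fun hS => hj ?_⟩)
      rw [hVoff i j (Ne.symm hji), hS.1, hS.2, max_self, max_self, sub_zero]
    rw [hU' i]
    exact sub_mul_sum_mem_Icc_inf'_sup' (mem_insert_self i _) hsum hoff
      (div_nonneg hΔt (hm i).le) hcfl hsupp
  refine ⟨hlocal, fun umin umax hbounds j => ?_⟩
  exact ⟨(le_inf' _ _ fun k _ => (hbounds k).1).trans (hlocal j).1,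
    (hlocal j).2.trans (sup'_le _ _ fun k _ => (hbounds k).2)⟩
end

section
/- (Discrete maximum principle for general low-order viscosities, covering the bilinear viscosity of Section 4.1.) Let S = (s_{ij}), V = (v_{ij}) ∈ ℝ^{N×N} satisfy ∑_{j=1}^N s_{ij} = 0 and ∑_{j=1}^N v_{ij} = 0 for every i, and v_{ij} ≥ max(0, s_{ij}) for all i ≠ j. Let m_i > 0 for every i and Δt ≥ 0 with Δt·(s_{ii} − v_{ii}) ≤ m_i for every i. Then s_{ii} − v_{ii} ≥ 0 for every i, and the update U'_i = U_i − (Δt/m_i) ∑_{j=1}^N (s_{ij} − v_{ij}) U_j satisfies min_{1≤j≤N} U_j ≤ U'_i ≤ max_{1≤j≤N} U_j for every i; in particular, if u_min ≤ U_j ≤ u_max for all j then u_min ≤ U'_i ≤ u_max for all i. -/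
/-!
With `a_j = s_ij - v_ij`, the row `a` sums to zero and is nonpositive off the diagonal, so
`a_i ≥ 0`. Writing `λ = Δt / m_i`, the update is `U'_i = ∑_j (δ_ij - λ a_j) U_j`: the weights
sum to `1` because `∑_j a_j = 0`, are nonnegative off the diagonal because `a_j ≤ 0`, and on the
diagonal by the CFL condition `λ a_i ≤ 1`. A convex combination of the `U_j` stays in every
interval containing them.
-/

open Finset Set

theorem nonneg_of_sum_eq_zero_of_forall_ne_nonpos {ι M : Type*} [Fintype ι]
    [AddCommGroup M] [PartialOrder M] [IsOrderedAddMonoid M]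
    {a : ι → M} {i : ι} (hsum : ∑ j, a j = 0) (hoff : ∀ j, j ≠ i → a j ≤ 0) : 0 ≤ a i := by
  classical
  have hrest : ∑ j ∈ univ.erase i, a j ≤ 0 :=
    sum_nonpos fun j hj => hoff j (ne_of_mem_erase hj)
  rw [← add_sum_erase _ _ (mem_univ i)] at hsum
  rw [eq_neg_of_add_eq_zero_left hsum]
  exact neg_nonneg.mpr hrest

theorem sub_mul_sum_mul_mem_Icc {ι 𝕜 : Type*} [Fintype ι]
    [Field 𝕜] [LinearOrder 𝕜] [IsStrictOrderedRing 𝕜]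
    {a U : ι → 𝕜} {i : ι} {c lo hi : 𝕜} (hsum : ∑ j, a j = 0) (hoff : ∀ j, j ≠ i → a j ≤ 0)
    (hc : 0 ≤ c) (hcfl : c * a i ≤ 1) (hU : ∀ j, U j ∈ Icc lo hi) :
    U i - c * ∑ j, a j * U j ∈ Icc lo hi := by
  classical
  set w : ι → 𝕜 := fun j => (if j = i then 1 else 0) - c * a j
  have hw_nonneg : ∀ j ∈ Finset.univ, 0 ≤ w j := by
    intro j _
    by_cases hji : j = i
    · subst hji; simpa only [w, if_true, sub_nonneg] using hcfl
    · simp only [w, if_neg hji, zero_sub, neg_nonneg]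
      exact mul_nonpos_of_nonneg_of_nonpos hc (hoff j hji)
  have hw_sum : ∑ j, w j = 1 := by
    simp only [w, sum_sub_distrib, ← mul_sum, hsum, mul_zero, sum_ite_eq', Finset.mem_univ, if_true,
      sub_zero]
  have hw_update : ∑ j, w j • U j = U i - c * ∑ j, a j * U j := by
    simp only [w, smul_eq_mul, sub_mul, sum_sub_distrib, ite_mul, one_mul, zero_mul,
      sum_ite_eq', Finset.mem_univ, if_true, mul_sum, mul_assoc]
  rw [← hw_update]
  exact (convex_Icc lo hi).sum_mem hw_nonneg hw_sum fun j _ => hU j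

open Finset in
/-- Discrete maximum principle for general low-order viscosities (covering the bilinear
viscosity): if `S` and `V` have zero row sums, `V i j ≥ max (0, S i j)` off the diagonal,
and the CFL condition `Δt * (S i i - V i i) ≤ m i` holds, then `S i i - V i i ≥ 0` and
the low-order update stays within the global extrema of `U`; in particular uniform
bounds are preserved. -/
theorem discrete_maximum_principle_general_viscosity
    (N : ℕ) (S V : Fin N → Fin N → ℝ)
    (hSrow : ∀ i, ∑ j, S i j = 0)
    (hVrow : ∀ i, ∑ j, V i j = 0)
    (hVoff : ∀ i j, i ≠ j → max 0 (S i j) ≤ V i j)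
    (m : Fin N → ℝ) (hm : ∀ i, 0 < m i)
    (Δt : ℝ) (hΔt : 0 ≤ Δt)
    (hCFL : ∀ i, Δt * (S i i - V i i) ≤ m i)
    (U U' : Fin N → ℝ)
    (hU' : ∀ i, U' i = U i - (Δt / m i) * ∑ j, (S i j - V i j) * U j) :
    (∀ i, 0 ≤ S i i - V i i) ∧
    (∀ i, (univ : Finset (Fin N)).inf' ⟨i, mem_univ i⟩ U ≤ U' i ∧
          U' i ≤ (univ : Finset (Fin N)).sup' ⟨i, mem_univ i⟩ U) ∧
    (∀ umin umax : ℝ, (∀ j, umin ≤ U j ∧ U j ≤ umax) →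
      ∀ i, umin ≤ U' i ∧ U' i ≤ umax) := by
  have hrow : ∀ i, ∑ j, (S i j - V i j) = 0 := fun i => by
    rw [sum_sub_distrib, hSrow i, hVrow i, sub_zero]
  have hoff : ∀ i j, j ≠ i → S i j - V i j ≤ 0 := fun i j hji =>
    sub_nonpos.mpr ((le_max_right _ _).trans (hVoff i j hji.symm))
  have hcfl : ∀ i, Δt / m i * (S i i - V i i) ≤ 1 := fun i => by
    rw [div_mul_eq_mul_div, div_le_one (hm i)]
    exact hCFL i
  have hbound : ∀ umin umax : ℝ, (∀ j, U j ∈ Icc umin umax) → ∀ i, U' i ∈ Icc umin umax :=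
    fun umin umax hU i => hU' i ▸
      sub_mul_sum_mul_mem_Icc (hrow i) (hoff i) (div_nonneg hΔt (hm i).le) (hcfl i) hU
  refine ⟨fun i => nonneg_of_sum_eq_zero_of_forall_ne_nonpos (a := S i - V i) (hrow i) (hoff i),
    fun i => ?_, hbound⟩
  exact hbound _ _ (fun j => ⟨inf'_le _ (mem_univ j), le_sup' _ (mem_univ j)⟩) i
end

section
/- (Lemma 4.4.) Let k be a positive integer and i ∈ {1,…,N} an index such that k·γ_i < 1 and U_i^M ≠ U_i^m. Then the high-order update satisfies U_i^H ≤ U_i^M − (U_i^M − U_i^m)·((1 − θ_i)(1 − k γ_i) − θ_i (1 − ψ_i) γ_i^−) and U_i^H ≥ U_i^m + (U_i^M − U_i^m)·(θ_i (1 − k γ_i) − (1 − θ_i)(1 − ψ_i) γ_i^+). -/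
/-!
Write `cᵢ = Δt / mᵢ`. Since the row of `S - V` sums to zero, the high-order update is
`Uᵢ + cᵢ ∑_{j ≠ i} (vᵢⱼ - sᵢⱼ) (Uⱼ - Uᵢ) + cᵢ ∑_{j ≠ i} (1 - ψᵢⱼ) vᵢⱼ (Uᵢ - Uⱼ)`.
The weights `vᵢⱼ - sᵢⱼ` are nonnegative, vanish outside the stencil and add up to `sᵢᵢ - vᵢᵢ`,
so the first sum lies between `γᵢ (Uᵢᵐ - Uᵢ)` and `γᵢ (Uᵢᴹ - Uᵢ)`. In the second sum only the
neighbours with `Uⱼ < Uᵢ` contribute positively, each by at most `(1 - ψᵢ) vᵢⱼ (Uᵢ - Uᵢᵐ)`.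
Since `γᵢ ≥ 0` and `k ≥ 1`, this gives the upper bound once `(Uᵢᴹ - Uᵢᵐ) θᵢ = Uᵢ - Uᵢᵐ` is
substituted; the lower bound is the upper bound for `-U`.
-/

open Finset

theorem sum_mul_le_sum_mul_of_le {ι : Type*} {s : Finset ι} {w f : ι → ℝ} {M : ℝ}
    (hw : ∀ j ∈ s, 0 ≤ w j) (hf : ∀ j ∈ s, w j ≠ 0 → f j ≤ M) :
    ∑ j ∈ s, w j * f j ≤ (∑ j ∈ s, w j) * M := by
  rw [sum_mul]
  refine sum_le_sum fun j hj => ?_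
  rcases eq_or_ne (w j) 0 with hw0 | hw0
  · simp [hw0]
  · exact mul_le_mul_of_nonneg_left (hf j hj hw0) (hw j hj)

section HighOrderUpdate

variable {ι : Type*} [Fintype ι] [DecidableEq ι]

theorem sum_mul_eq_sum_erase_mul_sub {a : ι → ℝ} (ha : ∑ j, a j = 0) (U : ι → ℝ) (i : ι) :
    ∑ j, a j * U j = ∑ j ∈ univ.erase i, a j * (U j - U i) := by
  rw [sum_erase _ (by simp)]
  simp [mul_sub, sum_sub_distrib, ← sum_mul, ha]

/-- The high-order update at node `i`, with `c = Δt / mᵢ` and `s, v` the `i`-th rows of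
`S, V`. -/
def highOrderUpdate (c : ℝ) (s v ψ U : ι → ℝ) (i : ι) : ℝ :=
  U i - c * (∑ j, (s j - v j) * U j)
    + c * ∑ j ∈ univ.erase i, (1 - max (ψ i) (ψ j)) * v j * (U i - U j)

theorem highOrderUpdate_neg (c : ℝ) (s v ψ U : ι → ℝ) (i : ι) :
    highOrderUpdate c s v ψ (-U) i = -highOrderUpdate c s v ψ U i := by
  simp only [highOrderUpdate, Pi.neg_apply, mul_neg, sum_neg_distrib, neg_sub_neg]
  simp only [← neg_sub (U i), mul_neg, sum_neg_distrib]
  ring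

variable {s v : ι → ℝ} {i : ι}

theorem highOrderUpdate_eq (hrow : ∑ j, (s j - v j) = 0) (c : ℝ) (ψ U : ι → ℝ) :
    highOrderUpdate c s v ψ U i = U i + c * ∑ j ∈ univ.erase i, (v j - s j) * (U j - U i)
      + c * ∑ j ∈ univ.erase i, (1 - max (ψ i) (ψ j)) * v j * (U i - U j) := by
  rw [highOrderUpdate, sum_mul_eq_sum_erase_mul_sub hrow U i]
  simp only [← neg_sub (v _), neg_mul, sum_neg_distrib]
  ring

theorem sub_eq_sum_erase_of_sum_sub_eq_zero (hrow : ∑ j, (s j - v j) = 0) :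
    s i - v i = ∑ j ∈ univ.erase i, (v j - s j) := by
  rw [sum_erase_eq_sub (mem_univ i)]
  simp only [← neg_sub (s _), sum_neg_distrib, hrow]
  ring

theorem sub_nonneg_of_sum_sub_eq_zero (hrow : ∑ j, (s j - v j) = 0)
    (hsv : ∀ j, i ≠ j → max 0 (s j) ≤ v j) : 0 ≤ s i - v i := by
  rw [sub_eq_sum_erase_of_sum_sub_eq_zero hrow]
  exact sum_nonneg fun j hj =>
    sub_nonneg.2 ((le_max_right _ _).trans (hsv j (ne_of_mem_erase hj).symm))

theorem sum_erase_scaled_viscosity_le {ψ U : ι → ℝ} {Um : ℝ}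
    (hv : ∀ j, i ≠ j → 0 ≤ v j) (hψ : ∀ j, ψ j ≤ 1)
    (hUm : ∀ j, i ≠ j → v j ≠ 0 → Um ≤ U j) :
    ∑ j ∈ univ.erase i, (1 - max (ψ i) (ψ j)) * v j * (U i - U j)
      ≤ (1 - ψ i) * (∑ j ∈ univ.filter fun j => U j < U i, v j) * (U i - Um) := by
  have hfilter : (univ.erase i).filter (fun j => U j < U i) = univ.filter fun j => U j < U i := by
    ext j
    simp only [mem_filter, mem_erase, mem_univ, and_true, true_and, and_iff_right_iff_imp]
    rintro h rfl
    exact lt_irrefl _ h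
  have hψij : ∀ j, 0 ≤ 1 - max (ψ i) (ψ j) := fun j => sub_nonneg.2 (max_le (hψ i) (hψ j))
  rw [← sum_filter_add_sum_filter_not _ (fun j => U j < U i), hfilter, mul_sum, sum_mul]
  refine add_le_of_le_of_nonpos (sum_le_sum fun j hj => ?_) (sum_nonpos fun j hj => ?_)
  · have hlt := (mem_filter.1 hj).2
    have hij : i ≠ j := fun h => lt_irrefl _ (h ▸ hlt)
    rcases eq_or_ne (v j) 0 with hv0 | hv0
    · simp [hv0]
    have hvj := hv j hij
    have hUmj := hUm j hij hv0
    have hUij : 0 ≤ U i - U j := sub_nonneg.2 hlt.le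
    have hψi : 0 ≤ 1 - ψ i := sub_nonneg.2 (hψ i)
    calc (1 - max (ψ i) (ψ j)) * v j * (U i - U j) ≤ (1 - ψ i) * v j * (U i - Um) := by
          gcongr
          exact le_max_left _ _
      _ = _ := by ring
  · obtain ⟨hj, hge⟩ := mem_filter.1 hj
    exact mul_nonpos_of_nonneg_of_nonpos (mul_nonneg (hψij j) (hv j (ne_of_mem_erase hj).symm))
      (by linarith [not_lt.1 hge])

variable {Nb : Finset ι} {UM Um c : ℝ} {ψ U : ι → ℝ}

theorem highOrderUpdate_le (hc : 0 ≤ c) (hrow : ∑ j, (s j - v j) = 0)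
    (hsv : ∀ j, i ≠ j → max 0 (s j) ≤ v j) (hψ : ∀ j, ψ j ≤ 1)
    (hNb : ∀ j, j ∉ Nb → j ≠ i → s j = 0 ∧ v j = 0)
    (hUM : ∀ j ∈ Nb, U j ≤ UM) (hUm : ∀ j ∈ Nb, Um ≤ U j) :
    highOrderUpdate c s v ψ U i ≤ U i + c * (s i - v i) * (UM - U i)
      + (1 - ψ i) * (c * ∑ j ∈ univ.filter fun j => U j < U i, v j) * (U i - Um) := by
  have hmem : ∀ j, i ≠ j → (s j ≠ 0 ∨ v j ≠ 0) → j ∈ Nb := fun j hij hj => by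
    by_contra hjNb
    obtain ⟨hs0, hv0⟩ := hNb j hjNb (Ne.symm hij)
    simp [hs0, hv0] at hj
  have hA : ∑ j ∈ univ.erase i, (v j - s j) * (U j - U i) ≤ (s i - v i) * (UM - U i) := by
    rw [sub_eq_sum_erase_of_sum_sub_eq_zero hrow]
    refine sum_mul_le_sum_mul_of_le (fun j hj => ?_) (fun j hj hj0 => ?_)
    · exact sub_nonneg.2 ((le_max_right _ _).trans (hsv j (ne_of_mem_erase hj).symm))
    · have hsv0 : s j ≠ 0 ∨ v j ≠ 0 := by
        by_contra! h
        simp [h.1, h.2] at hj0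
      linarith [hUM j (hmem j (ne_of_mem_erase hj).symm hsv0)]
  have hB := sum_erase_scaled_viscosity_le (Um := Um) (U := U)
    (fun j hij => (le_max_left _ _).trans (hsv j hij)) hψ
    (fun j hij hv0 => hUm j (hmem j hij (Or.inr hv0)))
  rw [highOrderUpdate_eq hrow]
  linear_combination mul_le_mul_of_nonneg_left hA hc + mul_le_mul_of_nonneg_left hB hc

theorem le_highOrderUpdate (hc : 0 ≤ c) (hrow : ∑ j, (s j - v j) = 0)
    (hsv : ∀ j, i ≠ j → max 0 (s j) ≤ v j) (hψ : ∀ j, ψ j ≤ 1)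
    (hNb : ∀ j, j ∉ Nb → j ≠ i → s j = 0 ∧ v j = 0)
    (hUM : ∀ j ∈ Nb, U j ≤ UM) (hUm : ∀ j ∈ Nb, Um ≤ U j) :
    U i - c * (s i - v i) * (U i - Um)
      - (1 - ψ i) * (c * ∑ j ∈ univ.filter fun j => U i < U j, v j) * (UM - U i)
      ≤ highOrderUpdate c s v ψ U i := by
  have := highOrderUpdate_le (U := -U) (UM := -Um) (Um := -UM) hc hrow hsv hψ hNb
    (fun j hj => neg_le_neg (hUm j hj)) (fun j hj => neg_le_neg (hUM j hj))
  simp only [highOrderUpdate_neg, Pi.neg_apply, neg_lt_neg_iff] at this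
  linarith

end HighOrderUpdate

theorem high_order_update_bounds_general
    (N : ℕ) (S V : Fin N → Fin N → ℝ)
    (hSrow : ∀ i, ∑ j, S i j = 0)
    (hVrow : ∀ i, ∑ j, V i j = 0)
    (hVoff : ∀ i j, i ≠ j → max 0 (S i j) ≤ V i j)
    (m : Fin N → ℝ) (hm : ∀ i, 0 < m i)
    (Δt : ℝ) (hΔt : 0 < Δt)
    (ψ : Fin N → ℝ) (hψ : ∀ i, 0 ≤ ψ i ∧ ψ i ≤ 1)
    (Nb : Fin N → Finset (Fin N))
    (hNbself : ∀ i, i ∈ Nb i)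
    (hNbzero : ∀ i j, j ∉ Nb i → j ≠ i → S i j = 0 ∧ V i j = 0)
    (U : Fin N → ℝ) (i : Fin N) (k : ℕ) (hk : 0 < k)
    (UM Um θi γi γm γp UH : ℝ)
    (hUM : UM = (Nb i).sup' ⟨i, hNbself i⟩ U)
    (hUm : Um = (Nb i).inf' ⟨i, hNbself i⟩ U)
    (hθ : θi = (U i - Um) / (UM - Um))
    (hγ : γi = (Δt / m i) * (S i i - V i i))
    (hγm : γm = (Δt / m i) * ∑ j ∈ univ.filter fun j => U j < U i, V i j)
    (hγp : γp = (Δt / m i) * ∑ j ∈ univ.filter fun j => U i < U j, V i j)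
    (hUH : UH = U i - (Δt / m i) * (∑ j, (S i j - V i j) * U j)
        + (Δt / m i) * ∑ j ∈ univ.erase i, (1 - max (ψ i) (ψ j)) * V i j * (U i - U j)) :
    UH ≤ UM - (UM - Um) * ((1 - θi) * (1 - (k : ℝ) * γi) - θi * (1 - ψ i) * γm) ∧
    Um + (UM - Um) * (θi * (1 - (k : ℝ) * γi) - (1 - θi) * (1 - ψ i) * γp) ≤ UH := by
  have hc : 0 ≤ Δt / m i := div_nonneg hΔt.le (hm i).le
  have hrow : ∑ j, (S i j - V i j) = 0 := by simp [sum_sub_distrib, hSrow, hVrow]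
  have hUMle : ∀ j ∈ Nb i, U j ≤ UM := fun j hj => hUM ▸ le_sup' U hj
  have hUmle : ∀ j ∈ Nb i, Um ≤ U j := fun j hj => hUm ▸ inf'_le U hj
  have hUiM : U i ≤ UM := hUMle i (hNbself i)
  have hUmi : Um ≤ U i := hUmle i (hNbself i)
  have hψ1 : ∀ j, ψ j ≤ 1 := fun j => (hψ j).2
  have hUH' : UH = highOrderUpdate (Δt / m i) (S i) (V i) ψ U i := hUH
  have hupper := highOrderUpdate_le hc hrow (hVoff i) hψ1 (hNbzero i) hUMle hUmle
  have hlower := le_highOrderUpdate hc hrow (hVoff i) hψ1 (hNbzero i) hUMle hUmle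
  rw [← hγ, ← hγm, ← hUH'] at hupper
  rw [← hγ, ← hγp, ← hUH'] at hlower
  -- `θᵢ` is a junk value when `Uᵢᴹ = Uᵢᵐ`, but then also `Uᵢ = Uᵢᵐ`.
  have hθ' : (UM - Um) * θi = U i - Um :=
    hθ ▸ mul_div_cancel_of_imp' fun h => by linarith
  have hγi : 0 ≤ γi := hγ ▸ mul_nonneg hc (sub_nonneg_of_sum_sub_eq_zero hrow (hVoff i))
  have hk1 : (1 : ℝ) ≤ k := by exact_mod_cast hk
  have hkγ : γi ≤ k * γi := le_mul_of_one_le_left hγi hk1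
  constructor
  · linear_combination hupper - ((1 - k * γi) + (1 - ψ i) * γm) * hθ'
      + mul_le_mul_of_nonneg_right hkγ (sub_nonneg.2 hUiM)
  · linear_combination hlower + ((1 - k * γi) + (1 - ψ i) * γp) * hθ'
      + mul_le_mul_of_nonneg_right hkγ (sub_nonneg.2 hUmi)

open Finset in
/-- Lemma 4.4: bounds for the high-order update with scaled viscosity. Here `UM, Um`
are the local max/min of `U` over the neighbor set `Nb i`, `θi` the normalized value,
`γi, γm, γp` the CFL quantities, and `UH` the high-order update with the elementwise
scaling `ψij = max (ψ i) (ψ j)` of the low-order viscosity. -/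
theorem high_order_update_bounds
    (N : ℕ) (S V : Fin N → Fin N → ℝ)
    (hSrow : ∀ i, ∑ j, S i j = 0)
    (hVrow : ∀ i, ∑ j, V i j = 0)
    (hVoff : ∀ i j, i ≠ j → max 0 (S i j) ≤ V i j)
    (m : Fin N → ℝ) (hm : ∀ i, 0 < m i)
    (Δt : ℝ) (hΔt : 0 < Δt)
    (ψ : Fin N → ℝ) (hψ : ∀ i, 0 ≤ ψ i ∧ ψ i ≤ 1)
    (Nb : Fin N → Finset (Fin N))
    (hNbself : ∀ i, i ∈ Nb i)
    (hNbzero : ∀ i j, j ∉ Nb i → j ≠ i → S i j = 0 ∧ V i j = 0)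
    (U : Fin N → ℝ) (i : Fin N) (k : ℕ) (hk : 0 < k)
    (UM Um θi γi γm γp UH : ℝ)
    (hUM : UM = (Nb i).sup' ⟨i, hNbself i⟩ U)
    (hUm : Um = (Nb i).inf' ⟨i, hNbself i⟩ U)
    (hθ : θi = (U i - Um) / (UM - Um))
    (hγ : γi = (Δt / m i) * (S i i - V i i))
    (hγm : γm = (Δt / m i) * ∑ j ∈ univ.filter fun j => U j < U i, V i j)
    (hγp : γp = (Δt / m i) * ∑ j ∈ univ.filter fun j => U i < U j, V i j)
    (hUH : UH = U i - (Δt / m i) * (∑ j, (S i j - V i j) * U j)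
        + (Δt / m i) * ∑ j ∈ univ.erase i, (1 - max (ψ i) (ψ j)) * V i j * (U i - U j))
    (hkγ : (k : ℝ) * γi < 1)
    (hne : UM ≠ Um) :
    UH ≤ UM - (UM - Um) * ((1 - θi) * (1 - (k : ℝ) * γi) - θi * (1 - ψ i) * γm) ∧
    Um + (UM - Um) * (θi * (1 - (k : ℝ) * γi) - (1 - θi) * (1 - ψ i) * γp) ≤ UH :=
  high_order_update_bounds_general N S V hSrow hVrow hVoff m hm Δt hΔt ψ hψ Nb hNbself hNbzero U i k
    hk UM Um θi γi γm γp UH hUM hUm hθ hγ hγm hγp hUH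
end

section
/- (Greedy limiter inequalities, Section 4.2.2.) Let k > 0, θ ∈ (0,1), γ ∈ ℝ with 0 ≤ kγ ≤ 1, and γ⁻ > 0, γ⁺ > 0 be real numbers. Define ψ := max(1 − (1 − kγ)·min((1 − θ)/(θ·γ⁻), θ/((1 − θ)·γ⁺)), 0). Then 0 ≤ ψ ≤ 1, (1 − θ)(1 − kγ) − θ(1 − ψ)γ⁻ ≥ 0, and θ(1 − kγ) − (1 − θ)(1 − ψ)γ⁺ ≥ 0. -/
/-!
By construction `1 - ψ ≤ (1 - kγ) · min a b` with `a = (1 - θ)/(θγ⁻)` and `b = θ/((1 - θ)γ⁺)`,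
and `a`, `b` are exactly the values of `(1 - ψ)/(1 - kγ)` at which the two inequalities
become equalities.
-/

section OrderedField

variable {K : Type*} [Field K] [LinearOrder K] [IsStrictOrderedRing K]

theorem max_one_sub_zero_mem_Icc {t : K} (ht : 0 ≤ t) : max (1 - t) 0 ∈ Set.Icc 0 1 :=
  ⟨le_max_right _ _, max_le (by linarith) zero_le_one⟩

theorem one_sub_max_one_sub_zero_le (t : K) : 1 - max (1 - t) 0 ≤ t := by
  linarith [le_max_left (1 - t) 0]

theorem sub_mul_nonneg_of_le_mul_div {n c x d₁ d₂ : K} (hd : 0 < d₁ * d₂)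
    (h : x ≤ c * (n / (d₁ * d₂))) : 0 ≤ n * c - d₁ * x * d₂ := by
  rw [mul_div_assoc', le_div_iff₀ hd] at h
  linarith

end OrderedField

theorem greedy_limiter_inequalities_general
    (k θ γ γm γp ψ : ℝ)
    (hθ0 : 0 < θ) (hθ1 : θ < 1)
    (hkγ1 : k * γ ≤ 1)
    (hγm : 0 < γm) (hγp : 0 < γp)
    (hψ : ψ = max (1 - (1 - k * γ) * min ((1 - θ) / (θ * γm)) (θ / ((1 - θ) * γp))) 0) :
    (0 ≤ ψ ∧ ψ ≤ 1) ∧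
    0 ≤ (1 - θ) * (1 - k * γ) - θ * (1 - ψ) * γm ∧
    0 ≤ θ * (1 - k * γ) - (1 - θ) * (1 - ψ) * γp := by
  have hc : 0 ≤ 1 - k * γ := sub_nonneg.mpr hkγ1
  set m := min ((1 - θ) / (θ * γm)) (θ / ((1 - θ) * γp))
  have hmin : 0 ≤ m := by positivity
  have hgap : 1 - ψ ≤ (1 - k * γ) * m := hψ ▸ one_sub_max_one_sub_zero_le _
  refine ⟨hψ ▸ max_one_sub_zero_mem_Icc (mul_nonneg hc hmin), ?_, ?_⟩
  · exact sub_mul_nonneg_of_le_mul_div (by positivity)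
      (hgap.trans (mul_le_mul_of_nonneg_left (min_le_left _ _) hc))
  · exact sub_mul_nonneg_of_le_mul_div (by positivity)
      (hgap.trans (mul_le_mul_of_nonneg_left (min_le_right _ _) hc))

/-- Greedy limiter inequalities (Section 4.2.2): the greedy scaling factor
`ψ := max (1 - (1 - kγ) * min ((1 - θ)/(θ γ⁻)) (θ/((1 - θ) γ⁺))) 0` lies in `[0,1]` and
satisfies the two conditions under which Lemma 4.4 yields the local discrete
maximum principle. -/
theorem greedy_limiter_inequalities
    (k θ γ γm γp ψ : ℝ)
    (hk : 0 < k) (hθ0 : 0 < θ) (hθ1 : θ < 1)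
    (hkγ0 : 0 ≤ k * γ) (hkγ1 : k * γ ≤ 1)
    (hγm : 0 < γm) (hγp : 0 < γp)
    (hψ : ψ = max (1 - (1 - k * γ) * min ((1 - θ) / (θ * γm)) (θ / ((1 - θ) * γp))) 0) :
    (0 ≤ ψ ∧ ψ ≤ 1) ∧
    0 ≤ (1 - θ) * (1 - k * γ) - θ * (1 - ψ) * γm ∧
    0 ≤ θ * (1 - k * γ) - (1 - θ) * (1 - ψ) * γp :=
  greedy_limiter_inequalities_general k θ γ γm γp ψ hθ0 hθ1 hkγ1 hγm hγp hψ
end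

section
/- (Theorem 4.5, discrete maximum principle for the FCT limiter with inflow.) Assume U_i^{min} ≤ U_i^L ≤ U_i^{max} for every i ∈ {1,…,N}. Then the limited update U_i = U_i^L + (Δt/m_i)(∑_{j=1}^N l_{ij} t_{ij} + α_i l_i) satisfies U_i^{min} ≤ U_i ≤ U_i^{max} for every i. In particular, when l_i = 0 for all i, the same bounds hold for the standard FCT limiter without inflow contributions. -/
/-!
Every bound reduces to a sign argument at a single node. Write `a = (m/Δt)(Uᵐᵃˣ - Uᴸ) ≥ 0` and
`b = (m/Δt)(Uᵐⁱⁿ - Uᴸ) ≤ 0` for the admissible increase and decrease of the mass-weighted state.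
The inflow limiter keeps `α l` in `[b, a]`, so `Q⁺ = a - α l ≥ 0 ≥ b - α l = Q⁻`, and all
ratios `R±` and coefficients `lᵢⱼ` are nonnegative. Since `lᵢⱼ ≤ R⁺ᵢ` on positive fluxes and
`lᵢⱼ ≤ R⁻ᵢ` on negative ones, the limited antidiffusion lies in `[R⁻ P⁻, R⁺ P⁺] ⊆ [Q⁻, Q⁺]`, so
the total correction lies in `[b, a]`, which is the claim after dividing by `m/Δt`.
-/

open Finset Set

namespace FCT

/-- The inflow limiter `αᵢ`, with `a`, `b` the admissible increase and decrease of node `i`. -/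
noncomputable def inflowLimiter (a b l : ℝ) : ℝ :=
  if l ≠ 0 then min 1 (max 0 (max (a / l) (b / l))) else 1

theorem inflowLimiter_mul_mem_Icc {a b : ℝ} (ha : 0 ≤ a) (hb : b ≤ 0) (l : ℝ) :
    inflowLimiter a b l * l ∈ Icc b a := by
  unfold inflowLimiter
  rcases lt_trichotomy l 0 with hl | rfl | hl
  · have hal : a / l ≤ 0 := div_nonpos_of_nonneg_of_nonpos ha hl.le
    have hbl : 0 ≤ b / l := div_nonneg_of_nonpos hb hl.le
    rw [if_pos hl.ne, max_eq_right (hal.trans hbl), max_eq_right hbl]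
    constructor
    · calc b = b / l * l := (div_mul_cancel₀ b hl.ne).symm
        _ ≤ min 1 (b / l) * l := mul_le_mul_of_nonpos_right (min_le_right _ _) hl.le
    · exact (mul_nonpos_of_nonneg_of_nonpos (le_min zero_le_one hbl) hl.le).trans ha
  · simpa using ⟨hb, ha⟩
  · have hal : 0 ≤ a / l := div_nonneg ha hl.le
    have hbl : b / l ≤ 0 := div_nonpos_of_nonpos_of_nonneg hb hl.le
    rw [if_pos hl.ne', max_eq_left (hbl.trans hal), max_eq_right hal]
    constructor
    · exact hb.trans (mul_nonneg (le_min zero_le_one hal) hl.le)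
    · calc min 1 (a / l) * l ≤ a / l * l := mul_le_mul_of_nonneg_right (min_le_right _ _) hl.le
        _ = a := div_mul_cancel₀ a hl.ne'

/-- Zalesak's nodal correction factor `R±ᵢ`. -/
noncomputable def fluxRatio (Q P : ℝ) : ℝ :=
  if P ≠ 0 then min 1 (Q / P) else 1

theorem fluxRatio_neg_neg (Q P : ℝ) : fluxRatio (-Q) (-P) = fluxRatio Q P := by
  simp only [fluxRatio, neg_ne_zero, neg_div_neg_eq]

theorem fluxRatio_nonneg {Q P : ℝ} (hQ : 0 ≤ Q) (hP : 0 ≤ P) : 0 ≤ fluxRatio Q P := by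
  unfold fluxRatio
  split_ifs
  exacts [le_min zero_le_one (div_nonneg hQ hP), zero_le_one]

theorem fluxRatio_nonneg_of_nonpos {Q P : ℝ} (hQ : Q ≤ 0) (hP : P ≤ 0) :
    0 ≤ fluxRatio Q P :=
  fluxRatio_neg_neg Q P ▸ fluxRatio_nonneg (neg_nonneg.2 hQ) (neg_nonneg.2 hP)

theorem fluxRatio_mul_le {Q P : ℝ} (hQ : 0 ≤ Q) (hP : 0 ≤ P) : fluxRatio Q P * P ≤ Q := by
  rcases hP.eq_or_lt with rfl | hP
  · simpa using hQ
  calc fluxRatio Q P * P ≤ Q / P * P := by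
        rw [fluxRatio, if_pos hP.ne']
        exact mul_le_mul_of_nonneg_right (min_le_right _ _) hP.le
    _ = Q := div_mul_cancel₀ Q hP.ne'

theorem le_fluxRatio_mul_of_nonpos {Q P : ℝ} (hQ : Q ≤ 0) (hP : P ≤ 0) :
    Q ≤ fluxRatio Q P * P := by
  have := fluxRatio_mul_le (neg_nonneg.2 hQ) (neg_nonneg.2 hP)
  rw [fluxRatio_neg_neg] at this
  linarith

theorem sum_mul_le_mul_sum_max_zero {ι : Type*} (s : Finset ι) {c t : ι → ℝ} {R : ℝ}
    (hc : ∀ j ∈ s, 0 ≤ c j) (hcR : ∀ j ∈ s, 0 < t j → c j ≤ R) :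
    ∑ j ∈ s, c j * t j ≤ R * ∑ j ∈ s, max 0 (t j) := by
  rw [mul_sum]
  refine sum_le_sum fun j hj => ?_
  rcases le_or_gt (t j) 0 with ht | ht
  · rw [max_eq_left ht, mul_zero]
    exact mul_nonpos_of_nonneg_of_nonpos (hc j hj) ht
  · rw [max_eq_right ht.le]
    exact mul_le_mul_of_nonneg_right (hcR j hj ht) ht.le

theorem mul_sum_min_zero_le_sum_mul {ι : Type*} (s : Finset ι) {c t : ι → ℝ} {R : ℝ}
    (hc : ∀ j ∈ s, 0 ≤ c j) (hcR : ∀ j ∈ s, t j < 0 → c j ≤ R) :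
    R * ∑ j ∈ s, min 0 (t j) ≤ ∑ j ∈ s, c j * t j := by
  have := sum_mul_le_mul_sum_max_zero s (t := fun j => -t j) hc
    fun j hj h => hcR j hj (neg_pos.1 h)
  have hmax j : max 0 (-t j) = -min 0 (t j) := by rw [← max_neg_neg, neg_zero]
  simp only [mul_neg, sum_neg_distrib, hmax] at this
  linarith

theorem add_div_mul_mem_Icc {m Δt x f lo hi : ℝ} (hm : 0 < m) (hΔt : 0 < Δt)
    (hf : f ∈ Icc (m / Δt * (lo - x)) (m / Δt * (hi - x))) :
    x + Δt / m * f ∈ Icc lo hi := by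
  have hc : 0 < m / Δt := div_pos hm hΔt
  rw [← inv_div, inv_mul_eq_div]
  constructor
  · linarith [(le_div_iff₀ hc).2 (by linarith [hf.1] : (lo - x) * (m / Δt) ≤ f)]
  · linarith [(div_le_iff₀ hc).2 (by linarith [hf.2] : f ≤ (hi - x) * (m / Δt))]

end FCT

open FCT in
theorem fct_inflow_discrete_maximum_principle_general
    (N : ℕ) (m : Fin N → ℝ) (hm : ∀ i, 0 < m i)
    (Δt : ℝ) (hΔt : 0 < Δt)
    (Umin Umax UL : Fin N → ℝ)
    (t : Fin N → Fin N → ℝ) (l : Fin N → ℝ)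
    (Pp Pm α Qp Qm Rp Rm : Fin N → ℝ) (lij : Fin N → Fin N → ℝ)
    (hPp : ∀ i, Pp i = ∑ j, max 0 (t i j))
    (hPm : ∀ i, Pm i = ∑ j, min 0 (t i j))
    (hα : ∀ i, α i = if l i ≠ 0 then
        min 1 (max 0 (max ((m i / Δt) * (Umax i - UL i) / l i)
                         ((m i / Δt) * (Umin i - UL i) / l i)))
      else 1)
    (hQp : ∀ i, Qp i = (m i / Δt) * (Umax i - UL i) - α i * l i)
    (hQm : ∀ i, Qm i = (m i / Δt) * (Umin i - UL i) - α i * l i)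
    (hRp : ∀ i, Rp i = if Pp i ≠ 0 then min 1 (Qp i / Pp i) else 1)
    (hRm : ∀ i, Rm i = if Pm i ≠ 0 then min 1 (Qm i / Pm i) else 1)
    (hlij : ∀ i j, lij i j = if 0 ≤ t i j then min (Rp i) (Rm j) else min (Rm i) (Rp j))
    (hUL : ∀ i, Umin i ≤ UL i ∧ UL i ≤ Umax i)
    (U : Fin N → ℝ)
    (hU : ∀ i, U i = UL i + (Δt / m i) * (∑ j, lij i j * t i j + α i * l i)) :
    ∀ i, Umin i ≤ U i ∧ U i ≤ Umax i := by
  have hinflow j : α j * l j ∈ Icc (m j / Δt * (Umin j - UL j)) (m j / Δt * (Umax j - UL j)) :=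
    hα j ▸ inflowLimiter_mul_mem_Icc
      (mul_nonneg (div_pos (hm j) hΔt).le (sub_nonneg.2 (hUL j).2))
      (mul_nonpos_of_nonneg_of_nonpos (div_pos (hm j) hΔt).le (sub_nonpos.2 (hUL j).1)) (l j)
  have hQp0 j : 0 ≤ Qp j := by linarith [hQp j, (hinflow j).2]
  have hQm0 j : Qm j ≤ 0 := by linarith [hQm j, (hinflow j).1]
  have hPp0 j : 0 ≤ Pp j := hPp j ▸ sum_nonneg fun _ _ => le_max_left _ _
  have hPm0 j : Pm j ≤ 0 := hPm j ▸ sum_nonpos fun _ _ => min_le_left _ _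
  have hRp0 j : 0 ≤ Rp j := hRp j ▸ fluxRatio_nonneg (hQp0 j) (hPp0 j)
  have hRm0 j : 0 ≤ Rm j := hRm j ▸ fluxRatio_nonneg_of_nonpos (hQm0 j) (hPm0 j)
  have hlij0 i j : 0 ≤ lij i j := by
    rw [hlij]; split_ifs
    exacts [le_min (hRp0 i) (hRm0 j), le_min (hRm0 i) (hRp0 j)]
  intro i
  have hupper : ∑ j, lij i j * t i j ≤ Qp i := calc
    _ ≤ Rp i * Pp i := hPp i ▸ sum_mul_le_mul_sum_max_zero _ (fun j _ => hlij0 i j)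
        fun j _ ht => by rw [hlij, if_pos ht.le]; exact min_le_left _ _
    _ ≤ Qp i := hRp i ▸ fluxRatio_mul_le (hQp0 i) (hPp0 i)
  have hlower : Qm i ≤ ∑ j, lij i j * t i j := calc
    _ ≤ Rm i * Pm i := hRm i ▸ le_fluxRatio_mul_of_nonpos (hQm0 i) (hPm0 i)
    _ ≤ _ := hPm i ▸ mul_sum_min_zero_le_sum_mul _ (fun j _ => hlij0 i j)
        fun j _ ht => by rw [hlij, if_neg ht.not_ge]; exact min_le_left _ _
  rw [hU i]
  exact add_div_mul_mem_Icc (hm i) hΔt ⟨by linarith [hQm i], by linarith [hQp i]⟩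

/-- Theorem 4.5: discrete maximum principle for the FCT limiter with inflow. If the
low-order solution satisfies the prescribed bounds, then so does the limited update
`U i = UL i + (Δt / m i) * (∑ j, lij i j * t i j + α i * l i)`, where `α` is the
inflow limiter and `lij` the FCT limiting coefficients built from `P±, Q±, R±`. -/
theorem fct_inflow_discrete_maximum_principle
    (N : ℕ) (m : Fin N → ℝ) (hm : ∀ i, 0 < m i)
    (Δt : ℝ) (hΔt : 0 < Δt)
    (Umin Umax UL : Fin N → ℝ)
    (hbounds : ∀ i, Umin i ≤ Umax i)
    (t : Fin N → Fin N → ℝ) (l : Fin N → ℝ)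
    (Pp Pm α Qp Qm Rp Rm : Fin N → ℝ) (lij : Fin N → Fin N → ℝ)
    (hPp : ∀ i, Pp i = ∑ j, max 0 (t i j))
    (hPm : ∀ i, Pm i = ∑ j, min 0 (t i j))
    (hα : ∀ i, α i = if l i ≠ 0 then
        min 1 (max 0 (max ((m i / Δt) * (Umax i - UL i) / l i)
                         ((m i / Δt) * (Umin i - UL i) / l i)))
      else 1)
    (hQp : ∀ i, Qp i = (m i / Δt) * (Umax i - UL i) - α i * l i)
    (hQm : ∀ i, Qm i = (m i / Δt) * (Umin i - UL i) - α i * l i)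
    (hRp : ∀ i, Rp i = if Pp i ≠ 0 then min 1 (Qp i / Pp i) else 1)
    (hRm : ∀ i, Rm i = if Pm i ≠ 0 then min 1 (Qm i / Pm i) else 1)
    (hlij : ∀ i j, lij i j = if 0 ≤ t i j then min (Rp i) (Rm j) else min (Rm i) (Rp j))
    (hUL : ∀ i, Umin i ≤ UL i ∧ UL i ≤ Umax i)
    (U : Fin N → ℝ)
    (hU : ∀ i, U i = UL i + (Δt / m i) * (∑ j, lij i j * t i j + α i * l i)) :
    ∀ i, Umin i ≤ U i ∧ U i ≤ Umax i :=
  fct_inflow_discrete_maximum_principle_general N m hm Δt hΔt Umin Umax UL t l Pp Pm α Qp Qm Rp Rm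
    lij hPp hPm hα hQp hQm hRp hRm hlij hUL U hU
end

section
/- (Global bound, Theorem 5.1.) Let a, b, c ∈ ℝ² and let f : ℝ² → ℝ be an affine map. Let u_min ≤ u_max be real numbers and suppose the values of f at the three edge midpoints (a+b)/2, (b+c)/2, (c+a)/2 all lie in the interval [u_min, u_max]. Then for every point x in the convex hull of {a, b, c}, one has 2·u_min − u_max ≤ f(x) ≤ 2·u_max − u_min. -/
/-! Each vertex is an alternating sum of the three edge midpoints, `a = m_ab + m_ca - m_bc`, so an
affine `f` satisfies `f a = f m_ab + f m_ca - f m_bc ∈ [2 u_min - u_max, 2 u_max - u_min]`, and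
likewise at `b` and `c`. The preimage of an interval under an affine map is convex, so the bound
passes from the vertices to their convex hull. -/

namespace AffineMap

theorem map_eq_map_midpoint_add_map_midpoint_sub {k V P : Type*} [Ring k] [Invertible (2 : k)]
    [AddCommGroup V] [Module k V] [AddTorsor V P] {W : Type*} [AddCommGroup W] [Module k W]
    (f : P →ᵃ[k] W) (a b c : P) :
    f a = f (midpoint k a b) + f (midpoint k c a) - f (midpoint k b c) := by
  simp only [f.map_midpoint, midpoint_eq_smul_add]
  rw [← smul_add, ← smul_sub, show f a + f b + (f c + f a) - (f b + f c) = (2 : k) • f a by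
    rw [two_smul]; abel, smul_smul, invOf_mul_self, one_smul]

theorem convexHull_subset_preimage_Icc {𝕜 E : Type*} [Field 𝕜] [LinearOrder 𝕜]
    [IsStrictOrderedRing 𝕜] [AddCommGroup E] [Module 𝕜 E] (f : E →ᵃ[𝕜] 𝕜) {s : Set E}
    {lo hi : 𝕜} (hs : ∀ v ∈ s, f v ∈ Set.Icc lo hi) :
    convexHull 𝕜 s ⊆ f ⁻¹' Set.Icc lo hi :=
  convexHull_min hs ((convex_Icc lo hi).affine_preimage f)

end AffineMap

theorem affine_global_bound_from_midpoints_general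
    (f : (ℝ × ℝ) →ᵃ[ℝ] ℝ) (a b c : ℝ × ℝ)
    (umin umax : ℝ)
    (hab : umin ≤ f (midpoint ℝ a b) ∧ f (midpoint ℝ a b) ≤ umax)
    (hbc : umin ≤ f (midpoint ℝ b c) ∧ f (midpoint ℝ b c) ≤ umax)
    (hca : umin ≤ f (midpoint ℝ c a) ∧ f (midpoint ℝ c a) ≤ umax) :
    ∀ x ∈ convexHull ℝ ({a, b, c} : Set (ℝ × ℝ)),
      2 * umin - umax ≤ f x ∧ f x ≤ 2 * umax - umin := by
  have ha := f.map_eq_map_midpoint_add_map_midpoint_sub a b c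
  have hb := f.map_eq_map_midpoint_add_map_midpoint_sub b c a
  have hc := f.map_eq_map_midpoint_add_map_midpoint_sub c a b
  have hvertices : ∀ v ∈ ({a, b, c} : Set (ℝ × ℝ)),
      f v ∈ Set.Icc (2 * umin - umax) (2 * umax - umin) := by
    rintro v (rfl | rfl | rfl) <;> constructor <;>
      linarith [hab.1, hab.2, hbc.1, hbc.2, hca.1, hca.2]
  exact fun x hx => f.convexHull_subset_preimage_Icc hvertices hx

/-- Global bound (Theorem 5.1): an affine function on ℝ² whose values at the three
edge midpoints of a triangle lie in `[u_min, u_max]` is bounded on the whole triangle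
(the convex hull of the vertices) by `2 u_min - u_max` below and `2 u_max - u_min`
above. -/
theorem affine_global_bound_from_midpoints
    (f : (ℝ × ℝ) →ᵃ[ℝ] ℝ) (a b c : ℝ × ℝ)
    (umin umax : ℝ) (h : umin ≤ umax)
    (hab : umin ≤ f (midpoint ℝ a b) ∧ f (midpoint ℝ a b) ≤ umax)
    (hbc : umin ≤ f (midpoint ℝ b c) ∧ f (midpoint ℝ b c) ≤ umax)
    (hca : umin ≤ f (midpoint ℝ c a) ∧ f (midpoint ℝ c a) ≤ umax) :
    ∀ x ∈ convexHull ℝ ({a, b, c} : Set (ℝ × ℝ)),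
      2 * umin - umax ≤ f x ∧ f x ≤ 2 * umax - umin :=
  affine_global_bound_from_midpoints_general f a b c umin umax hab hbc hca
end

section
/- (Sharpness of the global bound.) There exist an affine map f : ℝ² → ℝ and affinely independent points a, b, c ∈ ℝ² such that the values of f at the three edge midpoints (a+b)/2, (b+c)/2, (c+a)/2 all lie in the interval [−1, 1], yet f(a) = −3 = 2·(−1) − 1; hence the lower bound 2·u_min − u_max in the global bound theorem is attained and cannot be improved. -/
/-!
For every affine `f` and every triangle `a b c`, the vertex `a` is the affine combination
`m_ab + m_ca - m_bc` of the edge midpoints, so `f a = f m_ab + f m_ca - f m_bc`. The lower bound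
`2 u_min - u_max` is therefore attained as soon as the two midpoints adjacent to `a` take the
value `u_min = -1` and the opposite one the value `u_max = 1`. The first coordinate on the
triangle `(-3, 0), (1, 0), (1, 1)` does exactly this.
-/

theorem affineIndependent_of_det_ne_zero {k : Type*} [Field k] {a b c : k × k}
    (h : (b.1 - a.1) * (c.2 - a.2) - (b.2 - a.2) * (c.1 - a.1) ≠ 0) :
    AffineIndependent k ![a, b, c] := by
  rw [affineIndependent_iff_of_fintype]
  intro w hw hcomb
  rw [Finset.univ.weightedVSub_eq_linear_combination hw] at hcomb
  simp only [Fin.sum_univ_three, Matrix.cons_val_zero, Matrix.cons_val_one, Matrix.cons_val_two,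
    Matrix.head_cons, Matrix.tail_cons, Prod.ext_iff, Prod.fst_add, Prod.snd_add, Prod.smul_fst,
    Prod.smul_snd, Prod.fst_zero, Prod.snd_zero, smul_eq_mul] at hw hcomb
  obtain ⟨hfst, hsnd⟩ := hcomb
  have hx : w 1 * (b.1 - a.1) + w 2 * (c.1 - a.1) = 0 := by linear_combination hfst - a.1 * hw
  have hy : w 1 * (b.2 - a.2) + w 2 * (c.2 - a.2) = 0 := by linear_combination hsnd - a.2 * hw
  have hw₁ : w 1 = 0 :=
    (mul_eq_zero.mp (by linear_combination (c.2 - a.2) * hx - (c.1 - a.1) * hy)).resolve_right h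
  have hw₂ : w 2 = 0 :=
    (mul_eq_zero.mp (by linear_combination (b.1 - a.1) * hy - (b.2 - a.2) * hx)).resolve_right h
  have hw₀ : w 0 = 0 := by linear_combination hw - hw₁ - hw₂
  intro i
  fin_cases i <;> assumption

/-- Sharpness of the global bound: there are an affine map `f : ℝ² → ℝ` and an
affinely independent triple `a, b, c` whose three edge-midpoint values of `f` lie in
`[-1, 1]`, yet `f a = -3 = 2 * (-1) - 1`; hence the lower bound `2 u_min - u_max`
is attained. -/
theorem global_bound_sharp :
    ∃ (f : (ℝ × ℝ) →ᵃ[ℝ] ℝ) (a b c : ℝ × ℝ),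
      AffineIndependent ℝ ![a, b, c] ∧
      (-1 ≤ f (midpoint ℝ a b) ∧ f (midpoint ℝ a b) ≤ 1) ∧
      (-1 ≤ f (midpoint ℝ b c) ∧ f (midpoint ℝ b c) ≤ 1) ∧
      (-1 ≤ f (midpoint ℝ c a) ∧ f (midpoint ℝ c a) ≤ 1) ∧
      f a = -3 ∧ (-3 : ℝ) = 2 * (-1) - 1 := by
  refine ⟨(LinearMap.fst ℝ ℝ ℝ).toAffineMap, (-3, 0), (1, 0), (1, 1),
    affineIndependent_of_det_ne_zero (by norm_num), ?_⟩
  norm_num [midpoint_eq_smul_add]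
end
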